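/- If cf(𝔡) < 𝔡 (i.e., 𝔡 is singular), then there exists a cf(𝔡)-unbounded subset of [ℕ]^∞: a set X of cardinality cf(𝔡) such that every ≤-bounded subset of X has cardinality less than cf(𝔡). -/

import Mathlib

/-!
Index a dominating family `{d i : i < 𝔡}` by the ordinal `𝔡` and fix a cofinal set `S` of order
type `cf 𝔡`. Each `t ∈ S` is preceded by fewer than `𝔡` of the `d i`, so some strictly increasing
`G t` is not `≤*`-dominated by any of them. Every `f` is dominated by some `d i`, and `G t ≤* f`
then forces `t ≤ i`; since `𝔡` is infinite this bounds `t` inside `S`, so it happens for fewer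
than `cf 𝔡` indices. Finally `x t = {2 G t n + [n ∈ u t]}` with pairwise distinct tags `u t` gives
distinct sets whose enumerations dominate `G t` pointwise.
-/

open Set Cardinal Filter

/-- The increasing enumeration of a set of naturals (meaningful when the set is infinite). -/
noncomputable def enum (a : Set ℕ) : ℕ → ℕ := Nat.nth (· ∈ a)

/-- `a ⊎ b = {2k : k ∈ a} ∪ {2k+1 : k ∈ b}`. -/
def usum (a b : Set ℕ) : Set ℕ := (fun k => 2 * k) '' a ∪ (fun k => 2 * k + 1) '' b

/-- A dominating family of functions. -/
def IsDominating (D : Set (ℕ → ℕ)) : Prop :=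
  ∀ a : ℕ → ℕ, ∃ d ∈ D, ∀ᶠ n in Filter.atTop, a n ≤ d n

/-- The dominating number 𝔡. -/
noncomputable def dNum : Cardinal := sInf { c | ∃ D, IsDominating D ∧ c = #D }

theorem enum_range_of_strictMono {f : ℕ → ℕ} (hf : StrictMono f) : enum (range f) = f := by
  have hinf : (Set.ofPred (· ∈ range f)).Infinite := infinite_range_of_injective hf.injective
  refine (Nat.nth_strictMono hinf).range_inj hf |>.1 ?_
  exact Nat.range_nth_of_infinite hinf

theorem exists_strictMono_ge (g : ℕ → ℕ) : ∃ G : ℕ → ℕ, StrictMono G ∧ g ≤ G := by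
  refine ⟨fun n => ∑ k ∈ Finset.range (n + 1), (g k + 1), strictMono_nat_of_lt_succ fun n => ?_,
    fun n => ?_⟩
  · rw [Finset.sum_range_succ _ (n + 1)]
    omega
  · show g n ≤ ∑ k ∈ Finset.range (n + 1), (g k + 1)
    rw [Finset.sum_range_succ]
    omega

theorem Set.Countable.exists_eventually_lt {D : Set (ℕ → ℕ)} (hD : D.Countable) :
    ∃ g : ℕ → ℕ, ∀ f ∈ D, ∀ᶠ n in atTop, f n < g n := by
  obtain ⟨F, hDF⟩ := countable_iff_exists_subset_range.1 hD
  refine ⟨fun n => ∑ k ∈ Finset.range (n + 1), F k n + 1, fun f hf => ?_⟩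
  obtain ⟨i, rfl⟩ := hDF hf
  filter_upwards [eventually_ge_atTop i] with n hn
  have : F i n ≤ ∑ k ∈ Finset.range (n + 1), F k n :=
    Finset.single_le_sum (f := fun k => F k n) (fun _ _ => Nat.zero_le _)
      (Finset.mem_range.2 (Nat.lt_succ_of_le hn))
  omega

theorem isDominating_univ : IsDominating univ :=
  fun a => ⟨a, mem_univ a, .of_forall fun _ => le_rfl⟩

theorem dNum_le_mk {D : Set (ℕ → ℕ)} (hD : IsDominating D) : dNum ≤ #D :=
  csInf_le' ⟨D, hD, rfl⟩

theorem exists_isDominating_mk_eq_dNum : ∃ D, IsDominating D ∧ #D = dNum := by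
  obtain ⟨D, hD, hDeq⟩ := csInf_mem (s := { c | ∃ D, IsDominating D ∧ c = #D })
    ⟨_, univ, isDominating_univ, rfl⟩
  exact ⟨D, hD, hDeq.symm⟩

theorem dNum_le_continuum : dNum ≤ 𝔠 := by
  simpa [← power_def, aleph0_power_aleph0] using dNum_le_mk isDominating_univ

theorem aleph0_lt_dNum : ℵ₀ < dNum := by
  obtain ⟨D, hD, hDeq⟩ := exists_isDominating_mk_eq_dNum
  by_contra! hle
  obtain ⟨g, hg⟩ := (le_aleph0_iff_set_countable.1 (hDeq ▸ hle)).exists_eventually_lt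
  obtain ⟨d, hd, hgd⟩ := hD g
  obtain ⟨n, hlt, hle⟩ := ((hg d hd).and hgd).exists
  omega

theorem exists_strictMono_frequently_lt {E : Set (ℕ → ℕ)} (hE : #E < dNum) :
    ∃ G : ℕ → ℕ, StrictMono G ∧ ∀ f ∈ E, ∃ᶠ n in atTop, f n < G n := by
  have hE : ¬ IsDominating E := fun h => (dNum_le_mk h).not_gt hE
  simp only [IsDominating, not_forall, not_exists, not_and, not_eventually, not_le] at hE
  obtain ⟨g, hg⟩ := hE
  obtain ⟨G, hG, hgG⟩ := exists_strictMono_ge g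
  exact ⟨G, hG, fun f hf => (hg f hf).mono fun n hn => hn.trans_le (hgG n)⟩

theorem Order.exists_isCofinal_mk_Iio_lt_cof (α : Type*) [LinearOrder α] [WellFoundedLT α] :
    ∃ s : Set α, IsCofinal s ∧ #s = cof α ∧ ∀ t : s, #(Iio t) < cof α := by
  obtain ⟨s, hs, hstype⟩ := Ordinal.exists_ord_cof_eq α
  have hmk : #s = cof α := by rw [← Ordinal.card_type (α := s) (· < ·), hstype, card_ord]
  exact ⟨s, hs, hmk, fun t => hmk ▸ Cardinal.mk_Iio_lt t (by rw [hmk, hstype])⟩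

theorem exists_cof_dNum_unbounded_family :
    ∃ (ι : Type) (G : ι → ℕ → ℕ), #ι = (ord dNum).cof ∧ (∀ t, StrictMono (G t)) ∧
      ∀ f : ℕ → ℕ, #{t | ∀ᶠ n in atTop, G t n ≤ f n} < (ord dNum).cof := by
  obtain ⟨D, hD, hDmk⟩ := exists_isDominating_mk_eq_dNum
  let α := (ord dNum).ToType
  have : NoMaxOrder α := Cardinal.noMaxOrder aleph0_lt_dNum.le
  have hαmk : #α = dNum := by simp [α]
  have hα : ord #α = Ordinal.type (α := α) (· < ·) := by rw [hαmk, Ordinal.type_toType]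
  obtain ⟨e⟩ : Nonempty (α ≃ D) := Cardinal.eq.1 (hαmk.trans hDmk.symm)
  obtain ⟨s, hs, hsmk, hsIio⟩ := Order.exists_isCofinal_mk_Iio_lt_cof α
  rw [Ordinal.cof_toType] at hsmk hsIio
  have hesc (t : s) : ∃ G : ℕ → ℕ, StrictMono G ∧
      ∀ i < (t : α), ∃ᶠ n in atTop, (e i : ℕ → ℕ) n < G n := by
    obtain ⟨G, hG, hesc⟩ :=
      exists_strictMono_frequently_lt (E := (fun i => (e i : ℕ → ℕ)) '' Iio t)
        (mk_image_le.trans_lt ((mk_Iio_lt _ hα).trans_eq hαmk))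
    exact ⟨G, hG, fun i hi => hesc _ (mem_image_of_mem _ hi)⟩
  choose G hGmono hGesc using hesc
  refine ⟨s, G, hsmk, hGmono, fun f => ?_⟩
  obtain ⟨d, hd, hfd⟩ := hD f
  obtain ⟨j, hj⟩ := exists_gt (e.symm ⟨d, hd⟩)
  obtain ⟨t₀, ht₀, hjt₀⟩ := hs j
  refine (mk_le_mk_of_subset fun t (hGf : ∀ᶠ n in atTop, G t n ≤ f n) => ?_).trans_lt
    (hsIio ⟨t₀, ht₀⟩)
  by_contra ht₀t
  have ht₀t : t₀ ≤ (t : α) := not_lt.1 ht₀t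
  obtain ⟨n, hlt, hGfn, hfdn⟩ :=
    ((hGesc t _ (hj.trans_le (hjt₀.trans ht₀t))).and_eventually (hGf.and hfd)).exists
  simp only [Equiv.apply_symm_apply] at hlt
  omega

noncomputable def tagged (G : ℕ → ℕ) (u : Set ℕ) (n : ℕ) : ℕ := 2 * G n + u.indicator 1 n

theorem le_tagged (G : ℕ → ℕ) (u : Set ℕ) (n : ℕ) : G n ≤ tagged G u n := by
  unfold tagged; omega

theorem strictMono_tagged {G : ℕ → ℕ} (hG : StrictMono G) (u : Set ℕ) :
    StrictMono (tagged G u) := strictMono_nat_of_lt_succ fun n => by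
  have := hG (Nat.lt_add_one n)
  have : u.indicator 1 n ≤ 1 := by by_cases hn : n ∈ u <;> simp [hn]
  unfold tagged; omega

theorem eq_of_tagged_eq {G G' : ℕ → ℕ} {u u' : Set ℕ} (h : tagged G u = tagged G' u') :
    u = u' := by
  ext n
  have := congrFun h n
  unfold tagged at this
  by_cases hn : n ∈ u <;> by_cases hn' : n ∈ u' <;> simp [hn, hn'] at this ⊢ <;> omega

theorem stmt7_general :
    ∃ X : Set (Set ℕ), (∀ x ∈ X, x.Infinite) ∧ #X = (Cardinal.ord dNum).cof ∧
      ∀ Y ⊆ X, (∃ b : Set ℕ, b.Infinite ∧ ∀ y ∈ Y, ∀ n, enum y n ≤ enum b n) →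
        #Y < (Cardinal.ord dNum).cof := by
  obtain ⟨ι, G, hι, hG, hbdd⟩ := exists_cof_dNum_unbounded_family
  obtain ⟨u⟩ : Nonempty (ι ↪ Set ℕ) := by
    rw [← Cardinal.le_def, hι, mk_set, mk_nat, two_power_aleph0]
    exact (Ordinal.cof_ord_le _).trans dNum_le_continuum
  let x t := range (tagged (G t) (u t))
  have henum t : enum (x t) = tagged (G t) (u t) :=
    enum_range_of_strictMono (strictMono_tagged (hG t) _)
  have hx : Function.Injective x := fun t t' h =>
    u.injective (eq_of_tagged_eq (by rw [← henum, ← henum, h]))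
  refine ⟨range x, ?_, by rw [mk_range_eq x hx, hι], ?_⟩
  · rintro _ ⟨t, rfl⟩
    exact infinite_range_of_injective (strictMono_tagged (hG t) _).injective
  · rintro Y hYX ⟨b, -, hb⟩
    have hY : Y ⊆ x '' {t | ∀ᶠ n in atTop, G t n ≤ enum b n} := fun y hy => by
      obtain ⟨t, rfl⟩ := hYX hy
      exact ⟨t, .of_forall fun n => (le_tagged _ _ n).trans (henum t ▸ hb _ hy n), rfl⟩
    exact (mk_le_mk_of_subset hY).trans_lt (mk_image_le.trans_lt (hbdd _))

theorem stmt7 (h : (Cardinal.ord dNum).cof < dNum) :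
    ∃ X : Set (Set ℕ), (∀ x ∈ X, x.Infinite) ∧ #X = (Cardinal.ord dNum).cof ∧
      ∀ Y ⊆ X, (∃ b : Set ℕ, b.Infinite ∧ ∀ y ∈ Y, ∀ n, enum y n ≤ enum b n) →
        #Y < (Cardinal.ord dNum).cof :=
  stmt7_general
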